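/- Let A = (A; f) be a finite monounary algebra and C = Clo(A). Then the relational structure ⟨A;C•⟩ is polymorphism-homogeneous if and only if f is either bijective or constant. -/

import Mathlib

/- Common framework: operations, relations, clones, preservation,
   primitive positive definability, polymorphism-homogeneity. -/

namespace PaperPH

/-- `Op A n` is the set of `n`-ary operations on `A`. -/
abbrev Op (A : Type*) (n : ℕ) := (Fin n → A) → A

/-- A family of operations on `A`, sorted by arity. -/
abbrev OpFamily (A : Type*) := ∀ n : ℕ, Set (Op A n)

/-- A family of relations on `A`, sorted by arity. -/
abbrev RelFamily (A : Type*) := ∀ n : ℕ, Set (Set (Fin n → A))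

variable {A : Type*}

/-- The `k`-ary partial operation given by the total map `h` together with domain `D`
preserves the `n`-ary relation `ρ`: for every `n × k` matrix all of whose rows lie in `D`
and all of whose columns lie in `ρ`, applying `h` to the rows yields a tuple in `ρ`. -/
def pPreserves {k n : ℕ} (D : Set (Fin k → A)) (h : Op A k) (ρ : Set (Fin n → A)) : Prop :=
  ∀ M : Fin n → Fin k → A,
    (∀ i, M i ∈ D) → (∀ j, (fun i => M i j) ∈ ρ) → (fun i => h (M i)) ∈ ρ

/-- `h` (with domain `D`) preserves every relation of the family `R`. -/
def pPreservesAll {k : ℕ} (D : Set (Fin k → A)) (h : Op A k) (R : RelFamily A) : Prop :=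
  ∀ n, ∀ ρ ∈ R n, pPreserves D h ρ

/-- The relational structure `⟨A; R⟩` is polymorphism-homogeneous: for every `k ≥ 1`,
every partial operation preserving all relations of `R` extends to a total operation
preserving all relations of `R`. -/
def RelPolyHom (R : RelFamily A) : Prop :=
  ∀ k, 1 ≤ k → ∀ (D : Set (Fin k → A)) (h : Op A k), pPreservesAll D h R →
    ∃ g : Op A k, (∀ x ∈ D, g x = h x) ∧ pPreservesAll Set.univ g R

/-- A family of operations is a clone if it contains all projections and is closed
under composition. -/
def IsClone (C : OpFamily A) : Prop :=
  (∀ (n : ℕ) (i : Fin n), (fun x => x i) ∈ C n) ∧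
  (∀ (n k : ℕ) (f : Op A n) (g : Fin n → Op A k),
    f ∈ C n → (∀ i, g i ∈ C k) → (fun x => f (fun i => g i x)) ∈ C k)

/-- The clone generated by a family `F` of operations; for an algebra with basic
operations `F` this is its clone `Clo(A)` of term operations. -/
def CloGen (F : OpFamily A) : OpFamily A :=
  fun n => { f | ∀ C : OpFamily A, IsClone C → (∀ m, F m ⊆ C m) → f ∈ C n }

/-- The graph `f•` of an `n`-ary operation `f`: the solution set of
`f(x_1,…,x_n) = x_{n+1}`. -/
def graphRel {n : ℕ} (f : Op A n) : Set (Fin (n + 1) → A) :=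
  { a | f (fun i => a i.castSucc) = a (Fin.last n) }

/-- `C•`: the family of graphs of the operations in `C`. -/
def Cdot (C : OpFamily A) : RelFamily A := fun m =>
  match m with
  | 0 => ∅
  | n + 1 => { ρ | ∃ f ∈ C n, ρ = graphRel f }

/-- `C°`: the family of solution sets `Sol(f,g) = {a | f(a) = g(a)}` of equations
between members of `C` of the same arity. -/
def Ccirc (C : OpFamily A) : RelFamily A := fun n =>
  { ρ | ∃ f ∈ C n, ∃ g ∈ C n, ρ = { a | f a = g a } }

/-- `Pol R`: all total operations preserving every relation in `R`. -/
def PolOps (R : RelFamily A) : OpFamily A := fun k =>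
  { h | pPreservesAll Set.univ h R }

/-- `Inv F`: all relations preserved by every operation in `F`. -/
def InvRels (F : OpFamily A) : RelFamily A := fun n =>
  { ρ | ∀ k, 1 ≤ k → ∀ h ∈ F k, pPreserves (Set.univ : Set (Fin k → A)) h ρ }

/-- `⟨R⟩_∄`: the relations definable by quantifier-free primitive positive formulas
over `R`, i.e. by conjunctions of atomic formulas `τ_i(x_{σ_i(1)},…,x_{σ_i(r_i)})`
with `τ_i ∈ R`. -/
def qfDef (R : RelFamily A) : RelFamily A := fun n =>
  { ρ | ∃ (t : ℕ) (r : Fin t → ℕ) (τ : ∀ i : Fin t, Set (Fin (r i) → A))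
      (σ : ∀ i : Fin t, Fin (r i) → Fin n),
      (∀ i, τ i ∈ R (r i)) ∧
      ρ = { a | ∀ i, (fun j => a (σ i j)) ∈ τ i } }

/-- `⟨R⟩_∃`: the relations definable by primitive positive formulas over `R`
(existentially quantified conjunctions of atomic formulas over `R`). -/
def ppDef (R : RelFamily A) : RelFamily A := fun n =>
  { ρ | ∃ (m t : ℕ) (r : Fin t → ℕ) (τ : ∀ i : Fin t, Set (Fin (r i) → A))
      (σ : ∀ i : Fin t, Fin (r i) → Fin (n + m)),
      (∀ i, τ i ∈ R (r i)) ∧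
      ρ = { a | ∃ b : Fin m → A, ∀ i, (fun j => Fin.append a b (σ i j)) ∈ τ i } }

/-- `B ⊆ A^k` is closed under the componentwise action of the operations in `C`,
i.e. `B` is a subalgebra (possibly empty) of the `k`-th power. -/
def ClosedUnder (C : OpFamily A) (k : ℕ) (B : Set (Fin k → A)) : Prop :=
  ∀ n, ∀ f ∈ C n, ∀ M : Fin n → Fin k → A,
    (∀ i, M i ∈ B) → (fun j => f (fun i => M i j)) ∈ B

/-- `h` is a homomorphism from the subalgebra `B ≤ A^k` to `A` (w.r.t. the
operations in `C`): it commutes with the componentwise action on tuples from `B`. -/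
def IsHomOn (C : OpFamily A) {k : ℕ} (B : Set (Fin k → A)) (h : Op A k) : Prop :=
  ∀ n, ∀ f ∈ C n, ∀ M : Fin n → Fin k → A, (∀ i, M i ∈ B) →
    h (fun j => f (fun i => M i j)) = f (fun i => h (M i))

/-- The algebra with clone of term operations `C` is polymorphism-homogeneous:
for every `k ≥ 1`, every homomorphism from a subalgebra of `A^k` to `A` extends
to a homomorphism `A^k → A`. -/
def AlgPolyHom (C : OpFamily A) : Prop :=
  ∀ k, 1 ≤ k → ∀ B : Set (Fin k → A), ClosedUnder C k B →
    ∀ h : Op A k, IsHomOn C B h →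
      ∃ g : Op A k, (∀ x ∈ B, g x = h x) ∧ IsHomOn C Set.univ g

/-- The algebra with clone of term operations `C` is homomorphism-homogeneous:
every homomorphism from a subalgebra of `A` to `A` extends to an endomorphism of `A`. -/
def AlgHomHom (C : OpFamily A) : Prop :=
  ∀ B : Set (Fin 1 → A), ClosedUnder C 1 B →
    ∀ h : Op A 1, IsHomOn C B h →
      ∃ g : Op A 1, (∀ x ∈ B, g x = h x) ∧ IsHomOn C Set.univ g

/-- Property (SDC): the algebraic sets (solution sets of systems of equations, i.e.
the quantifier-free pp definable relations over `C°`) are exactly the relations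
closed under the centralizer `C* = Pol C•`. -/
def SDC (C : OpFamily A) : Prop :=
  ∀ n, 1 ≤ n → qfDef (Ccirc C) n = InvRels (PolOps (Cdot C)) n

/-- The subalgebra of `A^k` generated by `S` (w.r.t. the operations of `C`). -/
def Gen (C : OpFamily A) (k : ℕ) (S : Set (Fin k → A)) : Set (Fin k → A) :=
  ⋂₀ { B | ClosedUnder C k B ∧ S ⊆ B }

/-- The algebra with clone of term operations `C` is injective in `SP_fin(A)`,
the class of subalgebras of finite direct powers of `A`: every homomorphism from
a subalgebra `B ≤ B' ≤ A^m` to `A` extends to a homomorphism `B' → A`. -/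
def InjSPfin (C : OpFamily A) : Prop :=
  ∀ m, 1 ≤ m → ∀ B B' : Set (Fin m → A), ClosedUnder C m B → ClosedUnder C m B' → B ⊆ B' →
    ∀ h : Op A m, IsHomOn C B h →
      ∃ g : Op A m, (∀ x ∈ B, g x = h x) ∧ IsHomOn C B' g

end PaperPH

open PaperPH

namespace PaperPH

/-- The basic operations of a monounary algebra `(A; f)`: the single unary
operation `f`. -/
def unOps (A : Type*) (f : A → A) : OpFamily A := fun n =>
  match n with
  | 1 => ({ fun x => f (x 0) } : Set (Op A 1))
  | _ => ∅

/-- An element `a` of a monounary algebra `(A; f)` is cyclic if `f^[k] a = a`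
for some `k ≥ 1`. -/
def IsCyclicElem {A : Type*} (f : A → A) (a : A) : Prop :=
  ∃ k : ℕ, 1 ≤ k ∧ f^[k] a = a

/-- The height of an element `a` of a finite monounary algebra `(A; f)`: the least
nonnegative integer `m` such that `f^[m] a` is cyclic. -/
noncomputable def height {A : Type*} (f : A → A) (a : A) : ℕ :=
  sInf { m : ℕ | IsCyclicElem f (f^[m] a) }

/-- The monounary algebra `(B; fB)` belongs to `HSP(A; f)`, the variety generated by
`(A; f)` (signature with one unary operation symbol): it is a homomorphic image of a
subalgebra of a direct power of `(A; f)`. -/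
def InHSPun.{u, v} (A : Type u) (f : A → A) (B : Type v) (fB : B → B) : Prop :=
  ∃ (I : Type v) (S : Set (I → A)) (π : (I → A) → B),
    (∀ x ∈ S, (fun i => f (x i)) ∈ S) ∧
    (∀ x ∈ S, π (fun i => f (x i)) = fB (π x)) ∧
    (∀ b : B, ∃ x ∈ S, π x = b)

/-- The monounary algebra `(A; f)` is injective in the variety `HSP(A; f)`: for
members `B ≤ C` of the variety, every homomorphism `B → A` extends to a
homomorphism `C → A`. -/
def InjHSPun.{u, v} (A : Type u) (f : A → A) : Prop :=
  ∀ (B : Type v) (fB : B → B), InHSPun A f B fB →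
    ∀ S : Set B, (∀ x ∈ S, fB x ∈ S) →
      ∀ h : B → A, (∀ x ∈ S, h (fB x) = f (h x)) →
        ∃ g : B → A, (∀ x ∈ S, g x = h x) ∧ ∀ x : B, g (fB x) = f (g x)

end PaperPH

/-
A partial operation preserves the graphs of the term operations `x ↦ f^[m] (x i)` exactly when
it commutes with the iterates of `f` acting coordinatewise, so polymorphism-homogeneity of
`⟨A; C•⟩` says that every partial homomorphism `(A^k; f) ⇀ (A; f)` extends to a homomorphism.
For constant `f` the extension is `c` off the domain. For bijective `f` some iterate `f^[N]` is
the identity, so the orbit of a tuple meeting the domain is also its backward orbit: extend along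
these orbits and by a projection elsewhere. Otherwise pick `f a = f b` with `a ≠ b` and `d` outside
the range of `f`; tuples with first entry `d` are unreachable, so `(d, a) ↦ v`, `(d, b) ↦ a` is a
partial homomorphism for any `v`, and it extends only if `f v = f a`.
-/

namespace PaperPH

section Monounary

variable {X A : Type*} {F : X → X} {f : A → A}

/-- `h` is a partial homomorphism `(X; F) ⇀ (A; f)` on the domain `D`, which need not be
closed under `F`. -/
def PreservesIteratesOn (F : X → X) (f : A → A) (D : Set X) (h : X → A) : Prop :=
  ∀ m, ∀ x ∈ D, ∀ y ∈ D, F^[m] x = y → f^[m] (h x) = h y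

theorem preservesIteratesOn_univ_iff {g : X → A} :
    PreservesIteratesOn F f Set.univ g ↔ Function.Semiconj g F f := by
  refine ⟨fun hg x => hg 1 x trivial (F x) trivial rfl |>.symm, fun hg m x _ y _ hxy => ?_⟩
  rw [← hxy, (hg.iterate_right m).eq]

theorem PreservesIteratesOn.iterate_apply_eq_of_injective {D : Set X} {h : X → A}
    (hh : PreservesIteratesOn F f D h) (hF : F.Injective) {x y : X} (hx : x ∈ D) (hy : y ∈ D)
    {n n' : ℕ} (hxy : F^[n] x = F^[n'] y) : f^[n] (h x) = f^[n'] (h y) := by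
  wlog hle : n ≤ n' generalizing x y n n'
  · exact (this hy hx hxy.symm (by omega)).symm
  obtain ⟨d, rfl⟩ := Nat.exists_eq_add_of_le hle
  rw [Function.iterate_add_apply] at hxy ⊢
  rw [hh d y hy x hx (hF.iterate n hxy).symm]

theorem exists_semiconj_extension_of_const {p : X} {c : A} (hF : ∀ x, F x = p) (hf : ∀ a, f a = c)
    {D : Set X} {h : X → A} (hh : PreservesIteratesOn F f D h) :
    ∃ g : X → A, Set.EqOn g h D ∧ Function.Semiconj g F f := by
  classical
  refine ⟨fun x => if x ∈ D then h x else c, fun x hx => if_pos hx, fun x => ?_⟩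
  simp only [hF, hf]
  split_ifs with hp
  · simpa [hF, hf] using (hh 1 p hp p hp (hF p)).symm
  · rfl

theorem exists_semiconj_extension_of_iterate_eq_id {N : ℕ} (hN : 0 < N) (hFN : F^[N] = id)
    (g₀ : X → A) (hg₀ : Function.Semiconj g₀ F f) {D : Set X} {h : X → A}
    (hh : PreservesIteratesOn F f D h) :
    ∃ g : X → A, Set.EqOn g h D ∧ Function.Semiconj g F f := by
  classical
  have hFN' (x : X) : F^[N - 1] (F x) = x := by
    rw [← Function.iterate_succ_apply, Nat.succ_eq_add_one, Nat.sub_add_cancel hN, hFN, id]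
  have hF : F.Injective := Function.LeftInverse.injective hFN'
  let Reach (x : X) : Prop := ∃ p : D × ℕ, F^[p.2] p.1 = x
  have reach_of_reach_apply {x : X} (hx : Reach (F x)) : Reach x := by
    obtain ⟨⟨y, n⟩, hy⟩ := hx
    refine ⟨⟨y, N - 1 + n⟩, ?_⟩
    rw [Function.iterate_add_apply, hy, hFN']
  let g (x : X) : A := if hx : Reach x then f^[hx.choose.2] (h hx.choose.1) else g₀ x
  have g_iterate_apply (y : X) (hy : y ∈ D) (n : ℕ) : g (F^[n] y) = f^[n] (h y) := by
    have hx : Reach (F^[n] y) := ⟨⟨⟨y, hy⟩, n⟩, rfl⟩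
    simp only [g, dif_pos hx]
    exact hh.iterate_apply_eq_of_injective hF hx.choose.1.2 hy hx.choose_spec
  refine ⟨g, fun y hy => g_iterate_apply y hy 0, fun x => ?_⟩
  by_cases hx : Reach x
  · obtain ⟨⟨⟨y, hy⟩, n⟩, rfl⟩ := hx
    rw [← Function.iterate_succ_apply' F, g_iterate_apply y hy, g_iterate_apply y hy,
      Function.iterate_succ_apply']
  · simp only [g, dif_neg hx, dif_neg (mt reach_of_reach_apply hx), hg₀ x]

end Monounary

theorem iterate_comp_left {ι A : Type*} (f : A → A) (m : ℕ) (x : ι → A) :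
    (f ∘ ·)^[m] x = f^[m] ∘ x := by
  induction m with
  | zero => rfl
  | succ m ih => rw [Function.iterate_succ_apply', ih, Function.iterate_succ']; rfl

theorem exists_iterate_eq_id_of_bijective {A : Type*} [Finite A] {f : A → A}
    (hf : f.Bijective) : ∃ N, 0 < N ∧ f^[N] = id := by
  let σ : Equiv.Perm A := Equiv.ofBijective f hf
  refine ⟨orderOf σ, orderOf_pos σ, ?_⟩
  calc f^[orderOf σ] = ⇑(σ ^ orderOf σ) := rfl
    _ = id := by rw [pow_orderOf_eq_one, Equiv.Perm.coe_one]

theorem exists_preservesIteratesOn_not_extendable {A : Type*} {f : A → A} (hinj : ¬ f.Injective)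
    (hsurj : ¬ f.Surjective) (hconst : ∀ c, ∃ v, f v ≠ c) :
    ∃ (D : Set (Fin 2 → A)) (h : Op A 2), PreservesIteratesOn (f ∘ ·) f D h ∧
      ∀ g : Op A 2, Set.EqOn g h D → ¬ Function.Semiconj g (f ∘ ·) f := by
  classical
  obtain ⟨a, b, hfab, hab⟩ : ∃ a b, f a = f b ∧ a ≠ b := by
    simpa [Function.Injective] using hinj
  obtain ⟨d, hd⟩ : ∃ d, ∀ z, f z ≠ d := by simpa [Function.Surjective] using hsurj
  obtain ⟨v, hv⟩ := hconst (f a)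
  refine ⟨{x | x 0 = d}, fun x => if x 1 = a then v else a, ?_, fun g hg hsemi => hv ?_⟩
  · rintro (_ | m) x hx y hy hxy
    · rw [Function.iterate_zero_apply] at hxy
      rw [Function.iterate_zero_apply, hxy]
    · have := congrFun hxy 0
      rw [iterate_comp_left, Function.comp_apply, Function.iterate_succ_apply', hy] at this
      exact absurd this (hd _)
  · have hga : g ![d, a] = v := by simpa using hg (show ![d, a] ∈ {x | x 0 = d} from rfl)
    have hgb : g ![d, b] = a := by
      simpa [Ne.symm hab] using hg (show ![d, b] ∈ {x | x 0 = d} from rfl)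
    have hfx : f ∘ ![d, a] = f ∘ ![d, b] := by
      ext j; fin_cases j <;> simp [hfab]
    calc f v = f (g ![d, a]) := by rw [hga]
      _ = g (f ∘ ![d, a]) := (hsemi _).symm
      _ = g (f ∘ ![d, b]) := by rw [hfx]
      _ = f a := by rw [hsemi ![d, b], hgb]

theorem mem_cloGen_unOps_iff {A : Type*} {f : A → A} {n : ℕ} {g : Op A n} :
    g ∈ CloGen (unOps A f) n ↔ ∃ (m : ℕ) (i : Fin n), g = fun x => f^[m] (x i) := by
  constructor
  · intro hg
    refine hg (fun n => {g | ∃ (m : ℕ) (i : Fin n), g = fun x => f^[m] (x i)}) ⟨?_, ?_⟩ ?_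
    · exact fun n i => ⟨0, i, rfl⟩
    · rintro n k _ G ⟨m, i, rfl⟩ hG
      obtain ⟨m', j, hj⟩ := hG i
      exact ⟨m + m', j, by simp [hj, Function.iterate_add_apply]⟩
    · rintro (_ | _ | _) g hg
      · exact hg.elim
      · exact ⟨1, 0, hg⟩
      · exact hg.elim
  · rintro ⟨m, i, rfl⟩ C hC hF
    induction m with
    | zero => exact hC.1 n i
    | succ m ih =>
      simpa [Function.iterate_succ_apply'] using
        hC.2 1 n (fun x => f (x 0)) (fun _ x => f^[m] (x i)) (hF 1 rfl) fun _ => ih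

theorem pPreserves_graphRel_iterate_iff {A : Type*} {f : A → A} {n k : ℕ} {D : Set (Fin k → A)}
    {h : Op A k} (m : ℕ) (i : Fin n) :
    pPreserves D h (graphRel fun x : Fin n → A => f^[m] (x i)) ↔
      ∀ x ∈ D, ∀ y ∈ D, f^[m] ∘ x = y → f^[m] (h x) = h y := by
  constructor
  · intro hp x hx y hy hxy
    let M : Fin (n + 1) → Fin k → A := Fin.lastCases y fun _ => x
    have hM (i' : Fin (n + 1)) : M i' ∈ D := by
      induction i' using Fin.lastCases <;> simp [M, hx, hy]
    simpa [M, graphRel] using hp M hM fun j => by simpa [M, graphRel] using congrFun hxy j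
  · intro hp M hM hcol
    exact hp _ (hM _) _ (hM _) (funext hcol)

theorem pPreservesAll_cdot_cloGen_unOps_iff {A : Type*} {f : A → A} {k : ℕ}
    {D : Set (Fin k → A)} {h : Op A k} :
    pPreservesAll D h (Cdot (CloGen (unOps A f))) ↔ PreservesIteratesOn (f ∘ ·) f D h := by
  simp only [PreservesIteratesOn, iterate_comp_left]
  constructor
  · intro hp m
    have hρ : graphRel (fun x : Fin 1 → A => f^[m] (x 0)) ∈ Cdot (CloGen (unOps A f)) 2 :=
      ⟨_, mem_cloGen_unOps_iff.2 ⟨m, 0, rfl⟩, rfl⟩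
    exact (pPreserves_graphRel_iterate_iff m 0).1 (hp 2 _ hρ)
  · rintro hh (_ | n) ρ hρ
    · exact hρ.elim
    · obtain ⟨g, hg, rfl⟩ := hρ
      obtain ⟨m, i, rfl⟩ := mem_cloGen_unOps_iff.1 hg
      exact (pPreserves_graphRel_iterate_iff m i).2 (hh m)

theorem relPolyHom_cdot_cloGen_unOps_iff {A : Type*} {f : A → A} :
    RelPolyHom (Cdot (CloGen (unOps A f))) ↔
      ∀ k, 1 ≤ k → ∀ (D : Set (Fin k → A)) (h : Op A k), PreservesIteratesOn (f ∘ ·) f D h →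
        ∃ g : Op A k, Set.EqOn g h D ∧ Function.Semiconj g (f ∘ ·) f := by
  simp only [RelPolyHom, pPreservesAll_cdot_cloGen_unOps_iff, preservesIteratesOn_univ_iff]
  rfl

end PaperPH

/-- For a finite monounary algebra `(A; f)` with clone of term
operations `C`, the relational structure `⟨A;C•⟩` is polymorphism-homogeneous iff
`f` is either bijective or constant. -/
theorem monounary_Cdot_polyHom_iff (A : Type*) [Fintype A] (f : A → A)
    (C : OpFamily A) (hC : C = CloGen (unOps A f)) :
    RelPolyHom (Cdot C) ↔ (Function.Bijective f ∨ ∃ c : A, ∀ x : A, f x = c) := by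
  subst hC
  rw [relPolyHom_cdot_cloGen_unOps_iff]
  constructor
  · intro hext
    by_contra! hcon
    obtain ⟨hnbij, hnconst⟩ := hcon
    obtain ⟨D, h, hh, hno⟩ := exists_preservesIteratesOn_not_extendable
      (mt Finite.injective_iff_bijective.1 hnbij) (mt Finite.surjective_iff_bijective.1 hnbij)
      hnconst
    obtain ⟨g, hgh, hg⟩ := hext 2 (by norm_num) D h hh
    exact hno g hgh hg
  · rintro (hbij | ⟨c, hc⟩) k hk D h hh
    · obtain ⟨N, hN, hfN⟩ := exists_iterate_eq_id_of_bijective hbij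
      refine exists_semiconj_extension_of_iterate_eq_id hN ?_ (fun x : Fin k → A => x ⟨0, hk⟩)
        (fun _ => rfl) hh
      funext x
      rw [iterate_comp_left, hfN, Function.id_comp, id]
    · exact exists_semiconj_extension_of_const (fun x => funext fun j => hc (x j)) hc hh
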